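/- arXiv:2207.12479 — 3 statements merged into one kernel-verified Lean document; each statement's English description precedes it below -/
import Mathlib

section
/- Under the positivity, randomization and modularity assumptions, the conditional outcome distribution given administered treatment in the experimental regime is identified from observational quantities: for each t ∈ {0,1} and each outcome value y, P_E(Y=y | T=t) = Σ_x P_O(Y=y | T=t, X=x) · P_O(X=x), the sum ranging over x with P_O(X=x) > 0. -/
/-!
For a covariate value `x` of positive mass, positivity makes `P_O(T=t, X=x)` nonzero, so
modularity and randomization give, stratum by stratum,
`P_E(y,t,x) = P_E(T=t) · P_O(Y=y | T=t, X=x) · P_O(X=x)`; a covariate value of mass zero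
carries no `P_E`-mass at all. Summing over `x` and dividing by `P_E(T=t) > 0` gives the
adjustment formula.
-/

open scoped BigOperators

noncomputable section

variable {𝒴 𝒳 : Type*} [Countable 𝒴] [Countable 𝒳]

/-- Marginal mass of `X = x`. -/
def margX (P : 𝒴 × Bool × 𝒳 → ℝ) (x : 𝒳) : ℝ :=
  ∑' y : 𝒴, ∑' t : Bool, P (y, t, x)

/-- Marginal mass of `T = t`. -/
def margT (P : 𝒴 × Bool × 𝒳 → ℝ) (t : Bool) : ℝ :=
  ∑' y : 𝒴, ∑' x : 𝒳, P (y, t, x)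

/-- Joint mass of `T = t, X = x`. -/
def margTX (P : 𝒴 × Bool × 𝒳 → ℝ) (t : Bool) (x : 𝒳) : ℝ :=
  ∑' y : 𝒴, P (y, t, x)

/-- Joint mass of `Y = y, T = t`. -/
def margYT (P : 𝒴 × Bool × 𝒳 → ℝ) (y : 𝒴) (t : Bool) : ℝ :=
  ∑' x : 𝒳, P (y, t, x)

section Marginals

variable {Y X : Type*} {P : Y × Bool × X → ℝ}

theorem summable_slice (hP : Summable P) (t : Bool) (x : X) :
    Summable fun y => P (y, t, x) :=
  hP.comp_injective fun _ _ h => congrArg Prod.fst h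

theorem margX_nonneg (hP : ∀ z, 0 ≤ P z) (x : X) : 0 ≤ margX P x :=
  tsum_nonneg fun _ => tsum_nonneg fun _ => hP _

theorem margTX_nonneg (hP : ∀ z, 0 ≤ P z) (t : Bool) (x : X) : 0 ≤ margTX P t x :=
  tsum_nonneg fun _ => hP _

theorem margX_eq_margTX_add (hP : Summable P) (x : X) :
    margX P x = margTX P false x + margTX P true x := by
  simp only [margX, margTX, tsum_bool]
  exact (summable_slice hP false x).tsum_add (summable_slice hP true x)

theorem margT_false_add_margT_true (hP : Summable P) :
    margT P false + margT P true = ∑' z, P z := by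
  have hT (t : Bool) : Summable fun y => ∑' x, P (y, t, x) :=
    (hP.comp_injective (i := fun p : Y × X => (p.1, t, p.2)) fun _ _ h =>
      Prod.ext (congrArg (·.1) h) (congrArg (·.2.2) h)).prod
  have hfiber (y : Y) :
      ∑' w : Bool × X, P (y, w) = ∑' x, P (y, false, x) + ∑' x, P (y, true, x) := by
    rw [(hP.prod_factor y).tsum_prod, tsum_bool]
  rw [hP.tsum_prod, tsum_congr hfiber, (hT false).tsum_add (hT true)]
  rfl

theorem margT_pos (hP : HasSum P 1) (hpos : 0 < margT P true ∧ margT P true < 1) :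
    ∀ t, 0 < margT P t
  | false => by linarith [margT_false_add_margT_true hP.summable, hP.tsum_eq]
  | true => hpos.1

theorem margTX_pos {x : X} (hP : Summable P) (hx : 0 < margX P x)
    (hpos : 0 < margTX P true x / margX P x ∧ margTX P true x / margX P x < 1) :
    ∀ t, 0 < margTX P t x
  | false => by linarith [(div_lt_one hx).mp hpos.2, margX_eq_margTX_add hP x]
  | true => (div_pos_iff_of_pos_right hx).mp hpos.1

theorem apply_eq_zero_of_margX_eq_zero {x : X} (hnn : ∀ z, 0 ≤ P z) (hP : Summable P)
    (hx : margX P x = 0) (y : Y) (t : Bool) : P (y, t, x) = 0 := by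
  have hTX : margTX P t x = 0 := by
    have := margX_eq_margTX_add hP x
    cases t <;> linarith [margTX_nonneg hnn false x, margTX_nonneg hnn true x]
  exact le_antisymm (hTX ▸ (summable_slice hP t x).le_tsum y fun _ _ => hnn _) (hnn _)

theorem apply_eq_margT_mul_adjustment {P_O P_E : Y × Bool × X → ℝ}
    {y : Y} {t : Bool} {x : X} (hTX : margTX P_O t x ≠ 0)
    (hrand : margTX P_E t x = margT P_E t * margX P_E x)
    (hmodY : P_E (y, t, x) * margTX P_O t x = P_O (y, t, x) * margTX P_E t x)
    (hmodX : margX P_E x = margX P_O x) :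
    P_E (y, t, x) = margT P_E t * (P_O (y, t, x) / margTX P_O t x * margX P_O x) := by
  rw [hrand, hmodX] at hmodY
  field_simp
  linear_combination hmodY

end Marginals

theorem conditional_outcome_identification_general
    (P_O P_E : 𝒴 × Bool × 𝒳 → ℝ)
    (hO_sum : HasSum P_O 1)
    (hE_nonneg : ∀ z, 0 ≤ P_E z) (hE_sum : HasSum P_E 1)
    -- Positivity
    (hposE : 0 < margT P_E true ∧ margT P_E true < 1)
    (hposO : ∀ x : 𝒳, 0 < margX P_O x →
      0 < margTX P_O true x / margX P_O x ∧ margTX P_O true x / margX P_O x < 1)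
    -- Randomization: `T ⫫ X` under `P_E`
    (hrand : ∀ (t : Bool) (x : 𝒳), margTX P_E t x = margT P_E t * margX P_E x)
    -- Modularity (cross-multiplied form): `P_E(Y=y | T=t, X=x) = P_O(Y=y | T=t, X=x)`
    (hmodY : ∀ (y : 𝒴) (t : Bool) (x : 𝒳),
      P_E (y, t, x) * margTX P_O t x = P_O (y, t, x) * margTX P_E t x)
    -- Modularity: `P_E(X=x) = P_O(X=x)`
    (hmodX : ∀ x : 𝒳, margX P_E x = margX P_O x) :
    ∀ (t : Bool) (y : 𝒴),
      margYT P_E y t / margT P_E t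
        = ∑' x : 𝒳, (P_O (y, t, x) / margTX P_O t x) * margX P_O x := by
  intro t y
  have hstratum (x : 𝒳) :
      P_E (y, t, x) = margT P_E t * (P_O (y, t, x) / margTX P_O t x * margX P_O x) := by
    rcases (margX_nonneg hE_nonneg x).eq_or_lt with hzero | hpos
    · rw [apply_eq_zero_of_margX_eq_zero hE_nonneg hE_sum.summable hzero.symm, ← hmodX,
        ← hzero, mul_zero, mul_zero]
    · rw [hmodX] at hpos
      exact apply_eq_margT_mul_adjustment
        (margTX_pos hO_sum.summable hpos (hposO x hpos) t).ne' (hrand t x) (hmodY y t x) (hmodX x)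
  rw [margYT, tsum_congr hstratum, tsum_mul_left,
    mul_div_cancel_left₀ _ (margT_pos hE_sum hposE t).ne']

theorem conditional_outcome_identification
    (P_O P_E : 𝒴 × Bool × 𝒳 → ℝ)
    (hO_nonneg : ∀ z, 0 ≤ P_O z) (hO_sum : HasSum P_O 1)
    (hE_nonneg : ∀ z, 0 ≤ P_E z) (hE_sum : HasSum P_E 1)
    -- Positivity
    (hposE : 0 < margT P_E true ∧ margT P_E true < 1)
    (hposO : ∀ x : 𝒳, 0 < margX P_O x →
      0 < margTX P_O true x / margX P_O x ∧ margTX P_O true x / margX P_O x < 1)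
    -- Randomization: `T ⫫ X` under `P_E`
    (hrand : ∀ (t : Bool) (x : 𝒳), margTX P_E t x = margT P_E t * margX P_E x)
    -- Modularity (cross-multiplied form): `P_E(Y=y | T=t, X=x) = P_O(Y=y | T=t, X=x)`
    (hmodY : ∀ (y : 𝒴) (t : Bool) (x : 𝒳),
      P_E (y, t, x) * margTX P_O t x = P_O (y, t, x) * margTX P_E t x)
    -- Modularity: `P_E(X=x) = P_O(X=x)`
    (hmodX : ∀ x : 𝒳, margX P_E x = margX P_O x) :
    ∀ (t : Bool) (y : 𝒴),
      margYT P_E y t / margT P_E t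
        = ∑' x : 𝒳, (P_O (y, t, x) / margTX P_O t x) * margX P_O x :=
  conditional_outcome_identification_general P_O P_E hO_sum hE_nonneg hE_sum hposE hposO hrand hmodY
    hmodX

end
end

section
/- Distributional consistency is implied by the target-trial assumptions: under the extended positivity, extended randomization, conditional ignorability and extended modularity assumptions, for each t ∈ {0,1} and all x, y, P_E(X=x, Y=y | T^O=t, T=t) = P_O(X=x, Y=y | T=t), provided P_E(T^O=t, T=t) > 0 and P_O(T=t) > 0. -/
/-!
Extended discrete target-trial setup: `P_O` and `P_E` are probability mass functions on
`𝒴 × Bool × Bool × 𝒳` with coordinates `(Y, T, T^O, X)`; under `P_O` the event `{T = T^O}`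
has probability 1.
STATEMENT 8: Distributional consistency is implied by the target-trial assumptions: for each
`t ∈ {0,1}` and all `x, y`,
`P_E(X=x, Y=y | T^O=t, T=t) = P_O(X=x, Y=y | T=t)`,
provided `P_E(T^O=t, T=t) > 0` and `P_O(T=t) > 0`.
-/

open scoped BigOperators

noncomputable section

variable {𝒴 𝒳 : Type*} [Countable 𝒴] [Countable 𝒳]

/-- Marginal mass of `X = x` (coordinates are `(Y, T, T^O, X)`). -/
def mX (P : 𝒴 × Bool × Bool × 𝒳 → ℝ) (x : 𝒳) : ℝ :=
  ∑' y : 𝒴, ∑' t : Bool, ∑' t' : Bool, P (y, t, t', x)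

/-- Marginal mass of `T = t`. -/
def mT (P : 𝒴 × Bool × Bool × 𝒳 → ℝ) (t : Bool) : ℝ :=
  ∑' y : 𝒴, ∑' t' : Bool, ∑' x : 𝒳, P (y, t, t', x)

/-- Marginal mass of `T^O = t'`. -/
def mTo (P : 𝒴 × Bool × Bool × 𝒳 → ℝ) (t' : Bool) : ℝ :=
  ∑' y : 𝒴, ∑' t : Bool, ∑' x : 𝒳, P (y, t, t', x)

/-- Joint mass of `T = t, X = x`. -/
def mTX (P : 𝒴 × Bool × Bool × 𝒳 → ℝ) (t : Bool) (x : 𝒳) : ℝ :=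
  ∑' y : 𝒴, ∑' t' : Bool, P (y, t, t', x)

/-- Joint mass of `T^O = t', X = x`. -/
def mToX (P : 𝒴 × Bool × Bool × 𝒳 → ℝ) (t' : Bool) (x : 𝒳) : ℝ :=
  ∑' y : 𝒴, ∑' t : Bool, P (y, t, t', x)

/-- Joint mass of `Y = y, T = t, X = x`. -/
def mYTX (P : 𝒴 × Bool × Bool × 𝒳 → ℝ) (y : 𝒴) (t : Bool) (x : 𝒳) : ℝ :=
  ∑' t' : Bool, P (y, t, t', x)

/-- Joint mass of `T = t, T^O = t', X = x`. -/
def mTToX (P : 𝒴 × Bool × Bool × 𝒳 → ℝ) (t t' : Bool) (x : 𝒳) : ℝ :=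
  ∑' y : 𝒴, P (y, t, t', x)

/-- Joint mass of `T = t, T^O = t'`. -/
def mTTo (P : 𝒴 × Bool × Bool × 𝒳 → ℝ) (t t' : Bool) : ℝ :=
  ∑' y : 𝒴, ∑' x : 𝒳, P (y, t, t', x)

/-- Joint mass of `Y = y, T = t, T^O = t'`. -/
def mYTTo (P : 𝒴 × Bool × Bool × 𝒳 → ℝ) (y : 𝒴) (t t' : Bool) : ℝ :=
  ∑' x : 𝒳, P (y, t, t', x)

/-!
Randomization and ignorability factor the trial law as
`P_E(y, t, t', x) · P_E(x) = P_E(y, t, x) · P_E(t', x)` with `P_E(t, x) = P_E(t) · P_E(x)`.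
Modularity replaces `P_E(y | t, x)` and `P_E(t', x)` by their observational counterparts, and
since `T = T^O` under `P_O`, `P_O(T^O = t, X = x) = P_O(T = t, X = x)`. Together these give
`P_E(y, t, t, x) = P_O(y, t, x) · P_E(T = t)`, and summing over `y` and `x`,
`P_E(T = t, T^O = t) = P_E(T = t) · P_O(T = t)`; the factor `P_E(T = t)` cancels in the ratio.
-/

lemma tsum_tsum_fintype_comm {α β M : Type*} [Fintype β] [AddCommMonoid M] [TopologicalSpace M]
    [T2Space M] [ContinuousAdd M] {f : α → β → M} (hf : ∀ b, Summable fun a => f a b) :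
    ∑' a, ∑' b, f a b = ∑' b, ∑' a, f a b := by
  simp only [tsum_fintype]
  exact Summable.tsum_finsetSum fun b _ => hf b

section Marginals

variable {Y X : Type*} {P : Y × Bool × Bool × X → ℝ}

lemma summable_apply_fiber (hP : Summable P) (t t' : Bool) (x : X) :
    Summable fun y => P (y, t, t', x) :=
  hP.comp_injective fun _ _ h => by simpa using h

lemma summable_mYTX (hP : Summable P) (t : Bool) (x : X) :
    Summable fun y => mYTX P y t x := by
  simp only [mYTX, tsum_fintype]
  exact summable_sum fun t' _ => summable_apply_fiber hP t t' x

lemma mTTo_eq_tsum_mTToX (hP : Summable P) (t t' : Bool) :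
    mTTo P t t' = ∑' x, mTToX P t t' x :=
  (Summable.tsum_comm (f := fun y x => P (y, t, t', x))
    (hP.comp_injective fun _ _ h => by simpa [Prod.ext_iff] using h)).symm

lemma mTX_eq_tsum_mTToX (hP : Summable P) (t : Bool) (x : X) :
    mTX P t x = ∑' t', mTToX P t t' x :=
  tsum_tsum_fintype_comm fun t' => summable_apply_fiber hP t t' x

lemma mToX_eq_tsum_mTToX (hP : Summable P) (t' : Bool) (x : X) :
    mToX P t' x = ∑' t, mTToX P t t' x :=
  tsum_tsum_fintype_comm fun t => summable_apply_fiber hP t t' x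

lemma mX_eq_tsum_mTX (hP : Summable P) (x : X) : mX P x = ∑' t, mTX P t x :=
  tsum_tsum_fintype_comm fun t => summable_mYTX hP t x

lemma mX_eq_tsum_mToX (hP : Summable P) (x : X) : mX P x = ∑' t', mToX P t' x := by
  simp only [mX_eq_tsum_mTX hP, mTX_eq_tsum_mTToX hP, mToX_eq_tsum_mTToX hP, tsum_fintype]
  exact Finset.sum_comm

variable (hP0 : ∀ z, 0 ≤ P z)
include hP0

lemma mX_nonneg (x : X) : 0 ≤ mX P x :=
  tsum_nonneg fun _ => tsum_nonneg fun _ => tsum_nonneg fun _ => hP0 _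

lemma mToX_nonneg (t' : Bool) (x : X) : 0 ≤ mToX P t' x :=
  tsum_nonneg fun _ => tsum_nonneg fun _ => hP0 _

lemma apply_le_mYTX (y : Y) (t t' : Bool) (x : X) : P (y, t, t', x) ≤ mYTX P y t x :=
  Summable.le_tsum (f := fun s => P (y, t, s, x)) .of_finite t' fun _ _ => hP0 _

variable (hP : Summable P)
include hP

lemma mYTX_le_mTX (y : Y) (t : Bool) (x : X) : mYTX P y t x ≤ mTX P t x :=
  (summable_mYTX hP t x).le_tsum y fun _ _ => tsum_nonneg fun _ => hP0 _

lemma mTX_le_mX (t : Bool) (x : X) : mTX P t x ≤ mX P x := by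
  rw [mX_eq_tsum_mTX hP]
  exact Summable.le_tsum (f := fun s => mTX P s x) .of_finite t fun _ _ =>
    tsum_nonneg fun _ => tsum_nonneg fun _ => hP0 _

lemma mToX_le_mX (t' : Bool) (x : X) : mToX P t' x ≤ mX P x := by
  rw [mX_eq_tsum_mToX hP]
  exact Summable.le_tsum (f := fun s => mToX P s x) .of_finite t' fun _ _ =>
    tsum_nonneg fun _ => tsum_nonneg fun _ => hP0 _

end Marginals

section Diagonal

variable {Y X : Type*} {P : Y × Bool × Bool × X → ℝ}
  (hdiag : ∀ (y : Y) (t t' : Bool) (x : X), t ≠ t' → P (y, t, t', x) = 0)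
include hdiag

lemma mToX_eq_mTToX_of_diag (t : Bool) (x : X) : mToX P t x = mTToX P t t x :=
  tsum_congr fun y => tsum_eq_single t fun s hs => hdiag y s t x hs

lemma mTX_eq_mToX_of_diag (t : Bool) (x : X) : mTX P t x = mToX P t x := by
  rw [mToX_eq_mTToX_of_diag hdiag]
  exact tsum_congr fun y => tsum_eq_single t fun s hs => hdiag y t s x hs.symm

lemma mT_eq_tsum_mToX_of_diag (hP : Summable P) (t : Bool) : mT P t = ∑' x, mToX P t x := by
  have hmT : mT P t = mTTo P t t :=
    tsum_congr fun y => tsum_eq_single t fun s hs => by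
      simp [hdiag y t s _ hs.symm]
  rw [hmT, mTTo_eq_tsum_mTToX hP]
  exact tsum_congr fun x => (mToX_eq_mTToX_of_diag hdiag t x).symm

end Diagonal

section Randomization

variable {Y X : Type*} {P : Y × Bool × Bool × X → ℝ} (hP : Summable P)
  (hrand : ∀ (t t' : Bool) (x : X), mTToX P t t' x = mT P t * mToX P t' x)
include hP hrand

lemma mTX_eq_mT_mul_mX (t : Bool) (x : X) : mTX P t x = mT P t * mX P x := by
  simp only [mTX_eq_tsum_mTToX hP, mX_eq_tsum_mToX hP, hrand, tsum_mul_left]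

lemma mTTo_eq_mT_mul_tsum_mToX (t t' : Bool) : mTTo P t t' = mT P t * ∑' x, mToX P t' x := by
  simp only [mTTo_eq_tsum_mTToX hP, hrand, tsum_mul_left]

lemma apply_mul_mX_eq_of_ignorability
    (hign : ∀ (y : Y) (t t' : Bool) (x : X),
      P (y, t, t', x) * mTX P t x = mYTX P y t x * mTToX P t t' x)
    {t : Bool} (ht : mT P t ≠ 0) (y : Y) (t' : Bool) (x : X) :
    P (y, t, t', x) * mX P x = mYTX P y t x * mToX P t' x := by
  have h := hign y t t' x
  rw [mTX_eq_mT_mul_mX hP hrand, hrand] at h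
  exact mul_left_cancel₀ ht (by linear_combination h)

end Randomization

section Modularity

variable {Y X : Type*} {P Q : Y × Bool × Bool × X → ℝ}
  (hP0 : ∀ z, 0 ≤ P z) (hQ0 : ∀ z, 0 ≤ Q z) (hP : Summable P) (hQ : Summable Q)
include hP0 hQ0 hP hQ

lemma mToX_eq_of_mul_mX_eq {t' : Bool} {x : X} (hX : mX P x = mX Q x)
    (h : mToX P t' x * mX Q x = mToX Q t' x * mX P x) : mToX P t' x = mToX Q t' x := by
  rcases (mX_nonneg hQ0 x).eq_or_lt with h0 | hpos
  · linarith [mToX_le_mX hP0 hP t' x, mToX_le_mX hQ0 hQ t' x,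
      mToX_nonneg hP0 t' x, mToX_nonneg hQ0 t' x]
  · rw [hX] at h
    exact mul_right_cancel₀ hpos.ne' h

lemma apply_diag_eq_mYTX_mul_mT
    (hdiag : ∀ (y : Y) (t t' : Bool) (x : X), t ≠ t' → Q (y, t, t', x) = 0)
    (hrand : ∀ (t t' : Bool) (x : X), mTToX P t t' x = mT P t * mToX P t' x)
    (hign : ∀ (y : Y) (t t' : Bool) (x : X),
      P (y, t, t', x) * mTX P t x = mYTX P y t x * mTToX P t t' x)
    (hmodY : ∀ (y : Y) (t : Bool) (x : X),
      mYTX P y t x * mTX Q t x = mYTX Q y t x * mTX P t x)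
    {t : Bool} {x : X} (hX : mX P x = mX Q x) (hToX : mToX P t x = mToX Q t x)
    (ht : mT P t ≠ 0) (y : Y) :
    P (y, t, t, x) = mYTX Q y t x * mT P t := by
  have hcross : P (y, t, t, x) * mX P x = mYTX Q y t x * mT P t * mX P x :=
    calc P (y, t, t, x) * mX P x = mYTX P y t x * mToX P t x :=
          apply_mul_mX_eq_of_ignorability hP hrand hign ht y t x
      _ = mYTX P y t x * mTX Q t x := by rw [hToX, mTX_eq_mToX_of_diag hdiag]
      _ = mYTX Q y t x * mTX P t x := hmodY y t x
      _ = mYTX Q y t x * mT P t * mX P x := by rw [mTX_eq_mT_mul_mX hP hrand, mul_assoc]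
  rcases (mX_nonneg hP0 x).eq_or_lt with h0 | hpos
  · have hPy : P (y, t, t, x) ≤ 0 := h0 ▸ (apply_le_mYTX hP0 y t t x).trans
      ((mYTX_le_mTX hP0 hP y t x).trans (mTX_le_mX hP0 hP t x))
    have hQy : mYTX Q y t x ≤ 0 := h0 ▸ hX ▸
      (mYTX_le_mTX hQ0 hQ y t x).trans (mTX_le_mX hQ0 hQ t x)
    rw [le_antisymm hPy (hP0 _), le_antisymm hQy (tsum_nonneg fun _ => hQ0 _), zero_mul]
  · exact mul_right_cancel₀ hpos.ne' hcross

end Modularity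

theorem distributional_consistency_from_target_trial_assumptions_general
    (P_O P_E : 𝒴 × Bool × Bool × 𝒳 → ℝ)
    (hO_nonneg : ∀ z, 0 ≤ P_O z) (hO_sum : HasSum P_O 1)
    (hE_nonneg : ∀ z, 0 ≤ P_E z) (hE_sum : HasSum P_E 1)
    -- under `P_O`, `T = T^O` with probability one
    (hTTo : ∀ (y : 𝒴) (t t' : Bool) (x : 𝒳), t ≠ t' → P_O (y, t, t', x) = 0)
    -- Extended randomization: `T ⫫ (T^O, X)` under `P_E`
    (hrand : ∀ (t t' : Bool) (x : 𝒳), mTToX P_E t t' x = mT P_E t * mToX P_E t' x)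
    -- Conditional ignorability: `Y ⫫ T^O ∣ (T, X)` under `P_E` (cross-multiplied form)
    (hign : ∀ (y : 𝒴) (t t' : Bool) (x : 𝒳),
      P_E (y, t, t', x) * mTX P_E t x = mYTX P_E y t x * mTToX P_E t t' x)
    -- Extended modularity (cross-multiplied forms)
    (hmodY : ∀ (y : 𝒴) (t : Bool) (x : 𝒳),
      mYTX P_E y t x * mTX P_O t x = mYTX P_O y t x * mTX P_E t x)
    (hmodTo : ∀ (t' : Bool) (x : 𝒳),
      mToX P_E t' x * mX P_O x = mToX P_O t' x * mX P_E x)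
    (hmodX : ∀ x : 𝒳, mX P_E x = mX P_O x) :
    ∀ (t : Bool) (x : 𝒳) (y : 𝒴),
      0 < mTTo P_E t t → 0 < mT P_O t →
        P_E (y, t, t, x) / mTTo P_E t t = mYTX P_O y t x / mT P_O t := by
  intro t x y hEpos _
  have hE := hE_sum.summable
  have hO := hO_sum.summable
  have hToX : ∀ t' x, mToX P_E t' x = mToX P_O t' x := fun t' x =>
    mToX_eq_of_mul_mX_eq hE_nonneg hO_nonneg hE hO (hmodX x) (hmodTo t' x)
  have hden : mTTo P_E t t = mT P_E t * mT P_O t := by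
    rw [mTTo_eq_mT_mul_tsum_mToX hE hrand, mT_eq_tsum_mToX_of_diag hTTo hO]
    simp only [hToX]
  have ht : mT P_E t ≠ 0 := left_ne_zero_of_mul (hden ▸ hEpos.ne')
  rw [hden, apply_diag_eq_mYTX_mul_mT hE_nonneg hO_nonneg hE hO hTTo hrand hign hmodY
    (hmodX x) (hToX t x) ht y, mul_comm (mT P_E t), mul_div_mul_right _ _ ht]

theorem distributional_consistency_from_target_trial_assumptions
    (P_O P_E : 𝒴 × Bool × Bool × 𝒳 → ℝ)
    (hO_nonneg : ∀ z, 0 ≤ P_O z) (hO_sum : HasSum P_O 1)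
    (hE_nonneg : ∀ z, 0 ≤ P_E z) (hE_sum : HasSum P_E 1)
    -- under `P_O`, `T = T^O` with probability one
    (hTTo : ∀ (y : 𝒴) (t t' : Bool) (x : 𝒳), t ≠ t' → P_O (y, t, t', x) = 0)
    -- Positivity
    (hposE : 0 < mT P_E true ∧ mT P_E true < 1)
    (hposO : ∀ x : 𝒳, 0 < mX P_O x →
      0 < mToX P_O true x / mX P_O x ∧ mToX P_O true x / mX P_O x < 1)
    -- Extended randomization: `T ⫫ (T^O, X)` under `P_E`
    (hrand : ∀ (t t' : Bool) (x : 𝒳), mTToX P_E t t' x = mT P_E t * mToX P_E t' x)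
    -- Conditional ignorability: `Y ⫫ T^O ∣ (T, X)` under `P_E` (cross-multiplied form)
    (hign : ∀ (y : 𝒴) (t t' : Bool) (x : 𝒳),
      P_E (y, t, t', x) * mTX P_E t x = mYTX P_E y t x * mTToX P_E t t' x)
    -- Extended modularity (cross-multiplied forms)
    (hmodY : ∀ (y : 𝒴) (t : Bool) (x : 𝒳),
      mYTX P_E y t x * mTX P_O t x = mYTX P_O y t x * mTX P_E t x)
    (hmodTo : ∀ (t' : Bool) (x : 𝒳),
      mToX P_E t' x * mX P_O x = mToX P_O t' x * mX P_E x)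
    (hmodX : ∀ x : 𝒳, mX P_E x = mX P_O x) :
    ∀ (t : Bool) (x : 𝒳) (y : 𝒴),
      0 < mTTo P_E t t → 0 < mT P_O t →
        P_E (y, t, t, x) / mTTo P_E t t = mYTX P_O y t x / mT P_O t :=
  distributional_consistency_from_target_trial_assumptions_general P_O P_E hO_nonneg hO_sum
    hE_nonneg hE_sum hTTo hrand hign hmodY hmodTo hmodX

end
end

section
/- (Convergence of the posterior-variance bracket.) Let (Y_i, T_i, X_i), i ≥ 1, be i.i.d. with common law P_O, where Y_i is real-valued with E_{P_O}[Y⁴] < ∞ (so that all needed second moments of the weighted terms are finite), T_i ∈ {0,1}, X_i takes values in a countable type 𝒳, and ε < π(X_1) < 1 − ε almost surely for some ε ∈ (0, 1/2), where π(x) = P_O(T=1 | X=x). Let μ_0 = Σ_x E_{P_O}[Y | T=1, X=x] P_O(X=x) and m_2 = Σ_x E_{P_O}[Y² | T=1, X=x] P_O(X=x). Then ( Σ_{i=1}^n T_i Y_i² / π(X_i) ) / ( Σ_{j=1}^n T_j / π(X_j) ) − [ ( Σ_{i=1}^n T_i Y_i / π(X_i) ) / ( Σ_{j=1}^n T_j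 / π(X_j) ) ]² converges in probability to m_2 − μ_0² as n → ∞. -/
/-!
Each of the three sums is `n` times an empirical mean of i.i.d. inverse-probability-weighted
terms `T f(Y) / π(X)`, with `f(y) = y², y, 1`. On the fibre `{T = 1, X = x}` the weight
`1 / π(x) = μ(X = x) / μ(T = 1, X = x)` turns the integral of `f(Y)` into
`E[f(Y) | T = 1, X = x] μ(X = x)`, so the means are `m₂`, `μ₀` and `1`; the lower bound on `π`
makes the terms integrable. By the strong law the two ratios converge almost surely to `m₂` and
`μ₀`, hence the bracket converges almost surely, and so in probability, to `m₂ − μ₀²`.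
-/

open MeasureTheory
open scoped BigOperators ENNReal

noncomputable section

/-- The propensity score `π(x) = μ(T=1 | X=x)` of a law `μ` on `ℝ × Bool × 𝒳`. -/
def propLaw {𝒳 : Type*} [MeasurableSpace 𝒳] (μ : Measure (ℝ × Bool × 𝒳)) (x : 𝒳) : ℝ :=
  (μ {p | p.2.1 = true ∧ p.2.2 = x}).toReal / (μ {p | p.2.2 = x}).toReal

open ProbabilityTheory Filter Finset
open scoped Topology

theorem MeasureTheory.Integrable.pow_of_le_of_even {α : Type*} {m : MeasurableSpace α}
    {μ : Measure α} [IsFiniteMeasure μ] {f : α → ℝ} (hf : AEStronglyMeasurable f μ) {k q : ℕ}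
    (hkq : k ≤ q) (hq : Even q) (hint : Integrable (fun x => f x ^ q) μ) :
    Integrable (fun x => f x ^ k) μ := by
  have hnorm : Integrable (fun x => ‖f x‖ ^ q) μ := by
    simpa only [Real.norm_eq_abs, hq.pow_abs] using hint
  refine (integrable_norm_pow_of_le hf hkq hnorm).mono' (hf.pow k) (.of_forall fun x => ?_)
  rw [norm_pow]

theorem ProbabilityTheory.ae_tendsto_avg_comp_of_iIndepFun {Ω E : Type*} [MeasurableSpace Ω]
    [MeasurableSpace E] {P : Measure Ω} {Z : ℕ → Ω → E} (hZ : ∀ i, Measurable (Z i))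
    (hindep : iIndepFun Z P) {μ : Measure E} (hlaw : ∀ i, P.map (Z i) = μ)
    {g : E → ℝ} (hg : Measurable g) (hgi : Integrable g μ) :
    ∀ᵐ ω ∂P, Tendsto (fun n : ℕ => (∑ i ∈ range n, g (Z i ω)) / n) atTop (𝓝 (∫ p, g p ∂μ)) := by
  have hident : ∀ i, IdentDistrib (Z i) (Z 0) P P := fun i =>
    ⟨(hZ i).aemeasurable, (hZ 0).aemeasurable, by rw [hlaw i, hlaw 0]⟩
  have hint : Integrable (g ∘ Z 0) P :=
    (integrable_map_measure hg.aestronglyMeasurable (hZ 0).aemeasurable).mp (hlaw 0 ▸ hgi)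
  have hmean : ∫ ω, g (Z 0 ω) ∂P = ∫ p, g p ∂μ := by
    rw [← hlaw 0, integral_map (hZ 0).aemeasurable hg.aestronglyMeasurable]
  simpa only [hmean] using strong_law_ae_real (fun i ω => g (Z i ω)) hint
    (fun i j hij => (hindep.indepFun hij).comp hg hg) (fun i => (hident i).comp hg)

theorem Filter.Tendsto.div_of_div_natCast {u v : ℕ → ℝ} {a b : ℝ}
    (hu : Tendsto (fun n => u n / n) atTop (𝓝 a)) (hv : Tendsto (fun n => v n / n) atTop (𝓝 b))
    (hb : b ≠ 0) : Tendsto (fun n => u n / v n) atTop (𝓝 (a / b)) := by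
  refine (hu.div hv hb).congr' ?_
  filter_upwards [eventually_ne_atTop 0] with n hn
  exact div_div_div_cancel_right₀ (Nat.cast_ne_zero.mpr hn) _ _

section

variable {𝒳 : Type*} [MeasurableSpace 𝒳]

/-- The inverse-probability-weighted term `T f(Y) / π(X)`. -/
def ipwTerm (μ : Measure (ℝ × Bool × 𝒳)) (f : ℝ → ℝ) (p : ℝ × Bool × 𝒳) : ℝ :=
  if p.2.1 = true then f p.1 / propLaw μ p.2.2 else 0

/-- `∑ₓ E[f(Y) | T = 1, X = x] μ(X = x)`. -/
def adjustedMean (μ : Measure (ℝ × Bool × 𝒳)) (f : ℝ → ℝ) : ℝ :=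
  ∑' x : 𝒳, ((∫ p in {p : ℝ × Bool × 𝒳 | p.2.1 = true ∧ p.2.2 = x}, f p.1 ∂μ)
      / (μ {p : ℝ × Bool × 𝒳 | p.2.1 = true ∧ p.2.2 = x}).toReal)
    * (μ {p : ℝ × Bool × 𝒳 | p.2.2 = x}).toReal

theorem measurableSet_treated : MeasurableSet {p : ℝ × Bool × 𝒳 | p.2.1 = true} :=
  measurable_snd.fst (measurableSet_singleton true)

section

variable [MeasurableSingletonClass 𝒳]

theorem measurableSet_covariate_eq (x : 𝒳) : MeasurableSet {p : ℝ × Bool × 𝒳 | p.2.2 = x} :=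
  measurable_snd.snd (measurableSet_singleton x)

theorem measurableSet_treated_covariate_eq (x : 𝒳) :
    MeasurableSet {p : ℝ × Bool × 𝒳 | p.2.1 = true ∧ p.2.2 = x} :=
  measurableSet_treated.inter (measurableSet_covariate_eq x)

theorem measurable_ipwTerm [Countable 𝒳] (μ : Measure (ℝ × Bool × 𝒳)) {f : ℝ → ℝ}
    (hf : Measurable f) : Measurable (ipwTerm μ f) :=
  Measurable.ite measurableSet_treated
    ((hf.comp measurable_fst).div ((measurable_of_countable (propLaw μ)).comp measurable_snd.snd))
    measurable_const

end

variable {μ : Measure (ℝ × Bool × 𝒳)} {ε : ℝ}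

theorem lt_propLaw_of_measure_ne_zero (hπ : ∀ᵐ p ∂μ, ε < propLaw μ p.2.2) {x : 𝒳}
    (hx : μ {p | p.2.2 = x} ≠ 0) : ε < propLaw μ x := by
  by_contra hle
  refine hx (measure_mono_null (fun p (hp : p.2.2 = x) => ?_) (ae_iff.mp hπ))
  show ¬ε < propLaw μ p.2.2
  rwa [hp]

theorem integrable_ipwTerm [Countable 𝒳] [MeasurableSingletonClass 𝒳] (hε : 0 < ε)
    (hπ : ∀ᵐ p ∂μ, ε < propLaw μ p.2.2) {f : ℝ → ℝ} (hf : Measurable f)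
    (hfi : Integrable (fun p : ℝ × Bool × 𝒳 => f p.1) μ) : Integrable (ipwTerm μ f) μ := by
  refine (hfi.abs.const_mul ε⁻¹).mono' (measurable_ipwTerm μ hf).aestronglyMeasurable ?_
  filter_upwards [hπ] with p hp
  rw [ipwTerm, inv_mul_eq_div]
  split_ifs
  · rw [Real.norm_eq_abs, abs_div, abs_of_pos (hε.trans hp)]
    gcongr
  · rw [norm_zero]
    positivity

theorem setIntegral_treated_covariate_eq_div_propLaw [MeasurableSingletonClass 𝒳]
    (f : ℝ → ℝ) (x : 𝒳) :
    ∫ p in {p : ℝ × Bool × 𝒳 | p.2.1 = true ∧ p.2.2 = x}, f p.1 / propLaw μ p.2.2 ∂μ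
      = ((∫ p in {p : ℝ × Bool × 𝒳 | p.2.1 = true ∧ p.2.2 = x}, f p.1 ∂μ)
            / (μ {p : ℝ × Bool × 𝒳 | p.2.1 = true ∧ p.2.2 = x}).toReal)
          * (μ {p : ℝ × Bool × 𝒳 | p.2.2 = x}).toReal := by
  rw [setIntegral_congr_fun (measurableSet_treated_covariate_eq x)
      (fun p (hp : p.2.1 = true ∧ p.2.2 = x) => by rw [hp.2]), integral_div, propLaw]
  by_cases h1 : (μ {p : ℝ × Bool × 𝒳 | p.2.1 = true ∧ p.2.2 = x}).toReal = 0
  · simp [h1]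
  by_cases h2 : (μ {p : ℝ × Bool × 𝒳 | p.2.2 = x}).toReal = 0
  · simp [h2]
  field_simp

theorem integral_ipwTerm [Countable 𝒳] [MeasurableSingletonClass 𝒳] {f : ℝ → ℝ}
    (hint : Integrable (ipwTerm μ f) μ) :
    ∫ p, ipwTerm μ f p ∂μ = adjustedMean μ f := by
  have hind : ipwTerm μ f
      = {p : ℝ × Bool × 𝒳 | p.2.1 = true}.indicator (fun p => f p.1 / propLaw μ p.2.2) := by
    ext p
    rw [Set.indicator_apply]
    rfl
  have hunion : {p : ℝ × Bool × 𝒳 | p.2.1 = true}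
      = ⋃ x : 𝒳, {p : ℝ × Bool × 𝒳 | p.2.1 = true ∧ p.2.2 = x} := by
    ext p
    simp
  have hdisj : Pairwise (Function.onFun Disjoint
      fun x : 𝒳 => {p : ℝ × Bool × 𝒳 | p.2.1 = true ∧ p.2.2 = x}) :=
    fun x y hxy => Set.disjoint_left.mpr fun p hx hy => hxy (hx.2.symm.trans hy.2)
  have hint_on := (integrable_indicator_iff measurableSet_treated).mp (hind ▸ hint)
  rw [hunion] at hint_on
  rw [hind, integral_indicator measurableSet_treated, hunion,
    integral_iUnion measurableSet_treated_covariate_eq hdisj hint_on]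
  exact tsum_congr fun x => setIntegral_treated_covariate_eq_div_propLaw f x

theorem tsum_toReal_measure_covariate_eq [Countable 𝒳] [MeasurableSingletonClass 𝒳]
    [IsProbabilityMeasure μ] : ∑' x : 𝒳, (μ {p : ℝ × Bool × 𝒳 | p.2.2 = x}).toReal = 1 := by
  have h : ∑' x : 𝒳, μ {p : ℝ × Bool × 𝒳 | p.2.2 = x} = 1 := by
    rw [← tsum_univ]
    exact (tsum_measure_preimage_singleton Set.countable_univ
      (f := fun p : ℝ × Bool × 𝒳 => p.2.2) fun x _ => measurableSet_covariate_eq x).trans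
      measure_univ
  rw [← ENNReal.tsum_toReal_eq (fun _ => measure_ne_top μ _), h, ENNReal.toReal_one]

theorem integral_ipwTerm_one [Countable 𝒳] [MeasurableSingletonClass 𝒳] [IsProbabilityMeasure μ]
    (hε : 0 < ε) (hπ : ∀ᵐ p ∂μ, ε < propLaw μ p.2.2) :
    ∫ p, ipwTerm μ (fun _ => 1) p ∂μ = 1 := by
  rw [integral_ipwTerm (integrable_ipwTerm hε hπ measurable_const (integrable_const 1))]
  refine (tsum_congr fun x => ?_).trans (tsum_toReal_measure_covariate_eq (μ := μ))
  rcases eq_or_ne (μ {p : ℝ × Bool × 𝒳 | p.2.2 = x}) 0 with hx | hx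
  · simp [hx]
  have hpos : 0 < propLaw μ x := hε.trans (lt_propLaw_of_measure_ne_zero hπ hx)
  have htx : (μ {p : ℝ × Bool × 𝒳 | p.2.1 = true ∧ p.2.2 = x}).toReal ≠ 0 := by
    intro h
    simp [propLaw, h] at hpos
  rw [setIntegral_const, smul_eq_mul, mul_one, measureReal_def, div_self htx, one_mul]

/-- The Hájek (self-normalised IPW) estimator from the first `n` observations. -/
def hajekMean {Ω : Type*} (μ : Measure (ℝ × Bool × 𝒳)) (Z : ℕ → Ω → ℝ × Bool × 𝒳) (f : ℝ → ℝ)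
    (n : ℕ) (ω : Ω) : ℝ :=
  (∑ i ∈ range n, ipwTerm μ f (Z i ω)) / ∑ i ∈ range n, ipwTerm μ (fun _ => 1) (Z i ω)

section

variable [Countable 𝒳] [MeasurableSingletonClass 𝒳] {Ω : Type*} [MeasurableSpace Ω]
  {P : Measure Ω} {Z : ℕ → Ω → ℝ × Bool × 𝒳}

theorem measurable_hajekMean (hZ : ∀ i, Measurable (Z i)) {f : ℝ → ℝ} (hf : Measurable f)
    (n : ℕ) : Measurable (hajekMean μ Z f n) :=
  (measurable_sum _ fun i _ => (measurable_ipwTerm μ hf).comp (hZ i)).div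
    (measurable_sum _ fun i _ => (measurable_ipwTerm μ measurable_const).comp (hZ i))

theorem ae_tendsto_hajekMean [IsProbabilityMeasure μ] (hZ : ∀ i, Measurable (Z i))
    (hindep : iIndepFun Z P) (hlaw : ∀ i, P.map (Z i) = μ) (hε : 0 < ε)
    (hπ : ∀ᵐ p ∂μ, ε < propLaw μ p.2.2) {f : ℝ → ℝ} (hf : Measurable f)
    (hfi : Integrable (fun p : ℝ × Bool × 𝒳 => f p.1) μ) :
    ∀ᵐ ω ∂P, Tendsto (fun n => hajekMean μ Z f n ω) atTop
      (𝓝 (adjustedMean μ f)) := by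
  have hint := integrable_ipwTerm hε hπ hf hfi
  have hnum := ae_tendsto_avg_comp_of_iIndepFun hZ hindep hlaw (measurable_ipwTerm μ hf) hint
  have hden := ae_tendsto_avg_comp_of_iIndepFun hZ hindep hlaw
    (measurable_ipwTerm μ measurable_const)
    (integrable_ipwTerm hε hπ measurable_const (integrable_const 1))
  rw [integral_ipwTerm hint] at hnum
  rw [integral_ipwTerm_one hε hπ] at hden
  filter_upwards [hnum, hden] with ω hnum hden
  have hratio := hnum.div_of_div_natCast hden one_ne_zero
  rwa [div_one] at hratio

end

end

theorem posterior_variance_bracket_convergence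
    {Ω : Type*} [MeasurableSpace Ω]
    {𝒳 : Type*} [Countable 𝒳] [MeasurableSpace 𝒳] [MeasurableSingletonClass 𝒳]
    (P : Measure Ω) [IsProbabilityMeasure P]
    (Z : ℕ → Ω → ℝ × Bool × 𝒳)
    (hZmeas : ∀ i, Measurable (Z i))
    -- independence
    (hindep : ProbabilityTheory.iIndepFun Z P)
    -- identical distribution with common law `μO`
    (μO : Measure (ℝ × Bool × 𝒳)) [IsProbabilityMeasure μO]
    (hlaw : ∀ i, Measure.map (Z i) P = μO)
    (ε : ℝ) (hε : 0 < ε ∧ ε < 1 / 2)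
    -- `ε < π(X) < 1 − ε` almost surely
    (hπ : ∀ᵐ p ∂μO, ε < propLaw μO p.2.2 ∧ propLaw μO p.2.2 < 1 - ε)
    -- `E[Y⁴] < ∞`
    (hY4 : Integrable (fun p : ℝ × Bool × 𝒳 => p.1 ^ 4) μO)
    (μ0 m2 : ℝ)
    -- `μ₀ = ∑_x E[Y | T=1, X=x] P_O(X=x)`
    (hμ0 : μ0 = ∑' x : 𝒳,
      ((∫ p in {p : ℝ × Bool × 𝒳 | p.2.1 = true ∧ p.2.2 = x}, p.1 ∂μO)
          / (μO {p : ℝ × Bool × 𝒳 | p.2.1 = true ∧ p.2.2 = x}).toReal)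
        * (μO {p : ℝ × Bool × 𝒳 | p.2.2 = x}).toReal)
    -- `m₂ = ∑_x E[Y² | T=1, X=x] P_O(X=x)`
    (hm2 : m2 = ∑' x : 𝒳,
      ((∫ p in {p : ℝ × Bool × 𝒳 | p.2.1 = true ∧ p.2.2 = x}, p.1 ^ 2 ∂μO)
          / (μO {p : ℝ × Bool × 𝒳 | p.2.1 = true ∧ p.2.2 = x}).toReal)
        * (μO {p : ℝ × Bool × 𝒳 | p.2.2 = x}).toReal) :
    MeasureTheory.TendstoInMeasure P
      (fun (n : ℕ) ω =>
        (∑ i ∈ Finset.range n,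
            (if (Z i ω).2.1 = true then (Z i ω).1 ^ 2 / propLaw μO (Z i ω).2.2 else 0))
          / (∑ j ∈ Finset.range n,
              (if (Z j ω).2.1 = true then 1 / propLaw μO (Z j ω).2.2 else 0))
        - ((∑ i ∈ Finset.range n,
              (if (Z i ω).2.1 = true then (Z i ω).1 / propLaw μO (Z i ω).2.2 else 0))
            / ∑ j ∈ Finset.range n,
              (if (Z j ω).2.1 = true then 1 / propLaw μO (Z j ω).2.2 else 0)) ^ 2)
      Filter.atTop (fun _ => m2 - μ0 ^ 2) := by
  have hπ_lower : ∀ᵐ p ∂μO, ε < propLaw μO p.2.2 := hπ.mono fun _ h => h.1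
  have hY : AEStronglyMeasurable (fun p : ℝ × Bool × 𝒳 => p.1) μO :=
    measurable_fst.aestronglyMeasurable
  have hY2 := hY4.pow_of_le_of_even hY (k := 2) (by norm_num) (by decide)
  have hY1 : Integrable (fun p : ℝ × Bool × 𝒳 => p.1) μO := by
    simpa using hY4.pow_of_le_of_even hY (k := 1) (by norm_num) (by decide)
  have hm2_lim := ae_tendsto_hajekMean hZmeas hindep hlaw hε.1 hπ_lower
    (measurable_id.pow_const 2) hY2
  have hμ0_lim := ae_tendsto_hajekMean hZmeas hindep hlaw hε.1 hπ_lower measurable_id hY1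
  change TendstoInMeasure P
    (fun n ω => hajekMean μO Z (· ^ 2) n ω - hajekMean μO Z id n ω ^ 2) atTop _
  refine tendstoInMeasure_of_tendsto_ae (fun n => ?_) ?_
  · exact ((measurable_hajekMean hZmeas (measurable_id.pow_const 2) n).sub
      ((measurable_hajekMean hZmeas measurable_id n).pow_const 2)).aestronglyMeasurable
  · filter_upwards [hm2_lim, hμ0_lim] with ω hm2_ω hμ0_ω
    rw [hm2, hμ0]
    exact hm2_ω.sub (hμ0_ω.pow 2)

end
end
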